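/- arXiv:2506.22104 — 3 statements merged into one kernel-verified Lean document; each statement's English description precedes it below -/
import Mathlib

section
/- Let FinPtd denote the category of pointed finite sets and FinPtd^int its wide subcategory of inert maps. A functor M : FinPtd → Set satisfies the Segal condition if and only if the restriction of M to FinPtd^int is a (pointwise) right Kan extension of its restriction to the full subcategory {1₊} of FinPtd^int. -/
/-!
STATEMENT 6: Let `FinPtd` denote the category of pointed finite sets and `FinPtd^int`
its wide subcategory of inert maps.  A functor `M : FinPtd → Set` satisfies the Segal
condition if and only if the restriction of `M` to `FinPtd^int` is a (pointwise) right
Kan extension of its restriction to the full subcategory `{1₊}` of `FinPtd^int`.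
-/

open CategoryTheory

/-- The category of pointed finite sets. -/
structure FinPtd : Type 1 where
  carrier : Type
  [fin : Fintype carrier]
  pt : carrier

attribute [instance] FinPtd.fin

instance : Category FinPtd where
  Hom X Y := {f : X.carrier → Y.carrier // f X.pt = Y.pt}
  id X := ⟨id, rfl⟩
  comp f g := ⟨g.1 ∘ f.1, by simp [f.2, g.2]⟩
  id_comp f := Subtype.ext rfl
  comp_id f := Subtype.ext rfl
  assoc f g h := Subtype.ext rfl

/-- `A₊`: the pointed finite set obtained from a finite set `A` by freely adjoining a
basepoint `∞ = none`. -/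
def FinPtd.plusObj (A : Type) [Fintype A] : FinPtd := ⟨Option A, none⟩

/-- `1₊`, the pointed set with one non-basepoint element. -/
def FinPtd.one : FinPtd := FinPtd.plusObj PUnit

/-- The pointed map `ρ_a : A₊ → 1₊` sending `a` to the non-basepoint element and
everything else to the basepoint. -/
noncomputable def FinPtd.rho (A : Type) [Fintype A] (a : A) :
    FinPtd.plusObj A ⟶ FinPtd.one :=
  ⟨fun x => @ite _ (x = some a) (Classical.propDecidable _) (some PUnit.unit) none, by
    simp [FinPtd.plusObj, FinPtd.one]⟩

/-- The Segal condition for a `Set`-valued functor on `FinPtd`. -/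
def SegalCondition (M : FinPtd ⥤ Type) : Prop :=
  ∀ (A : Type) [Fintype A],
    Function.Bijective (fun m : M.obj (FinPtd.plusObj A) => fun a : A =>
      M.map (FinPtd.rho A a) m)

/-- A pointed map `f : A₊ → B₊` is inert if every non-basepoint element of the target
has exactly one preimage. -/
def FinPtd.Inert {X Y : FinPtd} (f : X ⟶ Y) : Prop :=
  ∀ b : Y.carrier, b ≠ Y.pt → ∃! a : X.carrier, f.1 a = b

/-- The wide subcategory of `FinPtd` on the inert maps. -/
structure FinPtdInt : Type 1 where
  obj : FinPtd

instance : Category FinPtdInt where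
  Hom X Y := {f : X.obj ⟶ Y.obj // FinPtd.Inert f}
  id X := ⟨𝟙 X.obj, fun b hb => ⟨b, rfl, fun a ha => ha⟩⟩
  comp {X Y Z} f g := ⟨f.1 ≫ g.1, by
    intro c hc
    obtain ⟨b, hb, hbu⟩ := g.2 c hc
    have hbne : b ≠ Y.obj.pt := by
      rintro rfl
      exact hc (hb.symm.trans g.1.2)
    obtain ⟨a, ha, hau⟩ := f.2 b hbne
    refine ⟨a, ?_, fun a' ha' => hau a' (hbu _ ha')⟩
    show g.1.1 (f.1.1 a) = c
    rw [ha, hb]⟩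
  id_comp f := Subtype.ext (Subtype.ext rfl)
  comp_id f := Subtype.ext (Subtype.ext rfl)
  assoc f g h := Subtype.ext (Subtype.ext rfl)

/-- The inclusion of the wide subcategory of inert maps. -/
def intIncl : FinPtdInt ⥤ FinPtd where
  obj X := X.obj
  map f := f.1
  map_id _ := rfl
  map_comp _ _ := rfl

/-- The object `1₊` of `FinPtd^int`. -/
def FinPtdInt.one : FinPtdInt := ⟨FinPtd.one⟩

/-- The inclusion of the full subcategory `{1₊} ⊆ FinPtd^int`. -/
def oneIncl : ObjectProperty.FullSubcategory (fun X : FinPtdInt => X = FinPtdInt.one) ⥤ FinPtdInt :=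
  ObjectProperty.ι _

/-!
For `X : FinPtd^int`, the index category `X ↓ {1₊}` of the pointwise Kan extension is discrete
(the only inert endomorphism of `1₊` is the identity), and its objects are the inert maps
`X → 1₊`, i.e. the maps `ρ_x` for the non-basepoint elements `x` of `X`. Hence the limit condition
at `X` says that `M X → ∏_{x ≠ ∗} M(1₊)` is bijective, which is the Segal condition transported
along `X ≅ (X ∖ {∗})₊`.
-/

open Limits

lemma CategoryTheory.Limits.Types.isLimit_iff_bijective_of_isDiscrete {J : Type*}
    [Category J] [IsDiscrete J] {F : J ⥤ Type*} (c : Cone F) :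
    Nonempty (IsLimit c) ↔ Function.Bijective (fun x j => c.π.app j x) := by
  have hsections (s : ∀ j, F.obj j) : s ∈ F.sections := fun {j _} f => by
    obtain rfl := obj_ext_of_isDiscrete f
    rw [Subsingleton.elim f (𝟙 j), F.map_id]
    rfl
  simp only [Types.isLimit_iff, Function.bijective_iff_existsUnique, funext_iff, hsections,
    forall_const]

namespace FinPtd

abbrev NonBasepoint (X : FinPtd) : Type := {x : X.carrier // x ≠ X.pt}

noncomputable instance (X : FinPtd) : Fintype X.NonBasepoint := Fintype.ofFinite _

instance : Subsingleton FinPtd.one.NonBasepoint where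
  allEq := by
    rintro ⟨_ | ⟨⟨⟩⟩, h⟩ ⟨_ | ⟨⟨⟩⟩, h'⟩
    exacts [absurd rfl h, absurd rfl h, absurd rfl h', rfl]

open Classical in
noncomputable def sel (X : FinPtd) (x : X.NonBasepoint) : X ⟶ FinPtd.one :=
  ⟨fun y => if y = x.1 then some PUnit.unit else none, if_neg (Ne.symm x.2)⟩

lemma sel_apply_eq_some_iff {X : FinPtd} (x : X.NonBasepoint) (y : X.carrier) :
    (sel X x).1 y = some PUnit.unit ↔ y = x.1 := by
  classical
  show (if y = x.1 then some PUnit.unit else none : Option PUnit) = some PUnit.unit ↔ _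
  simp

lemma sel_inert (X : FinPtd) (x : X.NonBasepoint) : Inert (sel X x) := by
  rintro (_ | ⟨⟨⟩⟩) hb
  · exact absurd rfl hb
  · exact ⟨x.1, (sel_apply_eq_some_iff x _).2 rfl, fun y hy => (sel_apply_eq_some_iff x y).1 hy⟩

lemma sel_injective (X : FinPtd) : Function.Injective (sel X) := fun x x' h =>
  Subtype.ext <| (sel_apply_eq_some_iff x' x.1).1 (h ▸ (sel_apply_eq_some_iff x x.1).2 rfl)

lemma hom_one_ext {X : FinPtd} {f g : X ⟶ FinPtd.one}
    (h : ∀ y, f.1 y = some PUnit.unit ↔ g.1 y = some PUnit.unit) : f = g :=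
  Subtype.ext <| funext fun y => Option.ext fun ⟨⟩ => h y

lemma exists_sel_eq_of_inert {X : FinPtd} (f : X ⟶ FinPtd.one) (hf : Inert f) :
    ∃ x, sel X x = f := by
  obtain ⟨a, ha, huniq⟩ := hf (some PUnit.unit) nofun
  have hane : a ≠ X.pt := fun h => by rw [h, f.2] at ha; exact nomatch ha
  refine ⟨⟨a, hane⟩, hom_one_ext fun y => ?_⟩
  rw [sel_apply_eq_some_iff]
  exact ⟨fun hy => hy ▸ ha, huniq y⟩

lemma rho_eq_sel (A : Type) [Fintype A] (a : A) :
    rho A a = sel (plusObj A) ⟨some a, Option.some_ne_none a⟩ := rfl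

def someNonBasepointEquiv (A : Type) [Fintype A] : A ≃ (plusObj A).NonBasepoint where
  toFun a := ⟨some a, Option.some_ne_none a⟩
  invFun x := x.1.get (Option.ne_none_iff_isSome.1 x.2)
  left_inv _ := rfl
  right_inv _ := Subtype.ext (Option.some_get _)

open Classical in
noncomputable def isoPlusNonBasepoint (X : FinPtd) : X ≅ plusObj X.NonBasepoint where
  hom := ⟨fun y => if h : y = X.pt then none else some ⟨y, h⟩, dif_pos rfl⟩
  inv := ⟨fun z => z.elim X.pt Subtype.val, rfl⟩
  hom_inv_id := Subtype.ext <| funext fun y => by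
    change Option.elim (if h : y = X.pt then none else some (⟨y, h⟩ : X.NonBasepoint))
      X.pt Subtype.val = y
    split_ifs with h
    exacts [h.symm, rfl]
  inv_hom_id := Subtype.ext <| funext fun
    | none => dif_pos rfl
    | some x => dif_neg x.2

lemma isoPlusNonBasepoint_hom_apply_eq_some_iff {X : FinPtd} (y : X.carrier)
    (x : X.NonBasepoint) : (isoPlusNonBasepoint X).hom.1 y = some x ↔ y = x.1 := by
  classical
  change (if h : y = X.pt then none else some (⟨y, h⟩ : X.NonBasepoint)) = some x ↔ _
  split_ifs with h
  · exact ⟨nofun, fun hx => absurd (hx ▸ h) x.2⟩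
  · simp [Subtype.ext_iff]

lemma sel_eq_isoPlusNonBasepoint_hom_comp_rho (X : FinPtd) (x : X.NonBasepoint) :
    sel X x = (isoPlusNonBasepoint X).hom ≫ rho X.NonBasepoint x :=
  hom_one_ext fun y => by
    change _ ↔ (rho X.NonBasepoint x).1 ((isoPlusNonBasepoint X).hom.1 y) = _
    rw [rho_eq_sel, sel_apply_eq_some_iff, sel_apply_eq_some_iff]
    exact (isoPlusNonBasepoint_hom_apply_eq_some_iff y x).symm

noncomputable def segalMap (M : FinPtd ⥤ Type) (X : FinPtd) (m : M.obj X) :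
    X.NonBasepoint → M.obj FinPtd.one :=
  fun x => M.map (sel X x) m

lemma segalCondition_iff_forall_bijective_segalMap (M : FinPtd ⥤ Type) :
    SegalCondition M ↔ ∀ X, Function.Bijective (segalMap M X) := by
  refine ⟨fun h X => ?_, fun h A _ => ?_⟩
  · have : segalMap M X = (fun m a => M.map (rho X.NonBasepoint a) m) ∘
        M.map (isoPlusNonBasepoint X).hom := by
      funext m x
      simp [segalMap, sel_eq_isoPlusNonBasepoint_hom_comp_rho]
    rw [this]
    exact (h X.NonBasepoint).comp (M.mapIso (isoPlusNonBasepoint X)).toEquiv.bijective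
  · have : (fun m a => M.map (rho A a) m) =
        (someNonBasepointEquiv A).symm.arrowCongr (Equiv.refl _) ∘ segalMap M (plusObj A) := by
      rfl
    rw [this]
    exact (Equiv.bijective _).comp (h _)

end FinPtd

namespace FinPtdInt

noncomputable def homOneEquiv (X : FinPtdInt) : X.obj.NonBasepoint ≃ (X ⟶ FinPtdInt.one) :=
  Equiv.ofBijective (fun x => ⟨FinPtd.sel X.obj x, FinPtd.sel_inert X.obj x⟩)
    ⟨fun _ _ h => FinPtd.sel_injective X.obj (congrArg Subtype.val h),
      fun f => (FinPtd.exists_sel_eq_of_inert f.1 f.2).imp fun _ => Subtype.ext⟩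

instance : Subsingleton (FinPtdInt.one ⟶ FinPtdInt.one) :=
  have : Subsingleton FinPtdInt.one.obj.NonBasepoint :=
    inferInstanceAs (Subsingleton FinPtd.one.NonBasepoint)
  (homOneEquiv FinPtdInt.one).symm.subsingleton

def oneFull : ObjectProperty.FullSubcategory (fun X : FinPtdInt => X = FinPtdInt.one) :=
  ⟨FinPtdInt.one, rfl⟩

noncomputable def homOneEquivStructuredArrow (X : FinPtdInt) :
    (X ⟶ FinPtdInt.one) ≃ StructuredArrow X oneIncl :=
  Equiv.ofBijective (fun f : X ⟶ FinPtdInt.one => StructuredArrow.mk (Y := oneFull) f)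
    ⟨fun _ _ h => by injection h, by
      rintro ⟨⟨⟨⟩⟩, ⟨_, rfl⟩, f⟩
      exact ⟨f, rfl⟩⟩

instance (X : FinPtdInt) : IsDiscrete (StructuredArrow X oneIncl) where
  subsingleton := by
    rintro ⟨⟨⟨⟩⟩, ⟨_, rfl⟩, _⟩ ⟨⟨⟨⟩⟩, ⟨_, rfl⟩, _⟩
    exact ⟨fun φ ψ => StructuredArrow.hom_ext _ _
      (ObjectProperty.hom_ext _ (Subsingleton.elim _ _))⟩
  eq_of_hom := by
    rintro ⟨⟨⟨⟩⟩, ⟨_, rfl⟩, f⟩ ⟨⟨⟨⟩⟩, ⟨_, rfl⟩, g⟩ φ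
    have hφ : φ.right = 𝟙 _ := ObjectProperty.hom_ext _ (Subsingleton.elim _ _)
    have hfg : f ≫ oneIncl.map φ.right = g := StructuredArrow.w φ
    rw [hφ, oneIncl.map_id, Category.comp_id] at hfg
    rw [hfg]

noncomputable def nonBasepointEquivStructuredArrow (X : FinPtdInt) :
    X.obj.NonBasepoint ≃ StructuredArrow X oneIncl :=
  X.homOneEquiv.trans X.homOneEquivStructuredArrow

end FinPtdInt

lemma isPointwiseRightKanExtensionAt_iff_bijective_segalMap (M : FinPtd ⥤ Type)
    (X : FinPtdInt) :
    Nonempty ((Functor.RightExtension.mk (intIncl ⋙ M)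
      (𝟙 (oneIncl ⋙ intIncl ⋙ M))).IsPointwiseRightKanExtensionAt X) ↔
        Function.Bijective (FinPtd.segalMap M X.obj) := by
  rw [Functor.RightExtension.IsPointwiseRightKanExtensionAt,
    Types.isLimit_iff_bijective_of_isDiscrete,
    ← (Equiv.piCongrLeft _ X.nonBasepointEquivStructuredArrow).symm.comp_bijective]
  -- the reindexed cone legs are `M.map (sel X x) ≫ 𝟙 _`
  rfl

theorem segal_iff_rightKanExtension_from_one (M : FinPtd ⥤ Type) :
    SegalCondition M ↔
      Nonempty ((Functor.RightExtension.mk (intIncl ⋙ M)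
          (𝟙 (oneIncl ⋙ intIncl ⋙ M))).IsPointwiseRightKanExtension) := by
  rw [FinPtd.segalCondition_iff_forall_bijective_segalMap,
    Functor.RightExtension.IsPointwiseRightKanExtension, Classical.nonempty_pi]
  simp only [isPointwiseRightKanExtensionAt_iff_bijective_segalMap]
  exact ⟨fun h X => h X.obj, fun h X => h ⟨X⟩⟩
end

section
/- If f : Γ → Λ and g : Λ → Ξ are combinatorial graph maps between connected graphs, then the pair (g_v ∘ f_v, f_a ∘ g_a) is a combinatorial graph map Γ → Ξ. Together with the identity maps, connected graphs and combinatorial graph maps form a category. -/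
/-- A graph: finite sets `V` of vertices and `A` of arcs (half-edges), a fixed-point
free involution `† = dag` on arcs, and an endpoint map `t : A → V ⊔ {∞}`
(we encode `V ⊔ {∞}` as `Option V` with `∞ = none`). -/
structure CGraph : Type 1 where
  V : Type
  A : Type
  [fintypeV : Fintype V]
  [fintypeA : Fintype A]
  dag : A → A
  dag_dag : ∀ a, dag (dag a) = a
  dag_ne : ∀ a, dag a ≠ a
  t : A → Option V

attribute [instance] CGraph.fintypeV CGraph.fintypeA

namespace CGraph

/-- The generating relation on `V ⊔ A`: an arc touches its `†`-partner, and an arc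
touches its endpoint (when the endpoint is a vertex). -/
inductive Touch (G : CGraph) : (G.V ⊕ G.A) → (G.V ⊕ G.A) → Prop
  | dag (a : G.A) : Touch G (Sum.inr a) (Sum.inr (G.dag a))
  | incid (a : G.A) (v : G.V) : G.t a = some v → Touch G (Sum.inr a) (Sum.inl v)

/-- A graph is connected if `V ⊔ A` is nonempty and the equivalence relation generated
by `Touch` has exactly one equivalence class. -/
def Connected (G : CGraph) : Prop :=
  Nonempty (G.V ⊕ G.A) ∧ ∀ x y : G.V ⊕ G.A, Relation.EqvGen G.Touch x y

/-- The valence of a vertex: the number of arcs ending at it. -/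
noncomputable def valence (G : CGraph) (v : G.V) : ℕ :=
  Nat.card {a : G.A // G.t a = some v}

/-- A vertex is bivalent if exactly two arcs end at it. -/
def Bivalent (G : CGraph) (v : G.V) : Prop := G.valence v = 2

/-- `x ∈ V ⊔ {∞}` is bivalent or `∞`. -/
def BivAt (G : CGraph) (x : Option G.V) : Prop :=
  x = none ∨ ∃ v, x = some v ∧ G.Bivalent v

/-- `IsPath G l s e`: the list of arcs `l = [a₁, …, aₙ]` is a path from `s` to `e`:
`t(a₁†) = s`, `t(aᵢ) = t(aᵢ₊₁†)` for `i < n`, and `t(aₙ) = e`; the empty path is a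
path from `s` to `e` exactly when `s = e`. -/
def IsPath (G : CGraph) : List G.A → Option G.V → Option G.V → Prop
  | [], s, e => s = e
  | a :: l, s, e => G.t (G.dag a) = s ∧ G.IsPath l (G.t a) e

/-- A path is bivalent if each of its intermediate vertices `t(aᵢ)`, `i < n`, is
bivalent or `∞`. -/
def IsBivalentPath (G : CGraph) (l : List G.A) (s e : Option G.V) : Prop :=
  G.IsPath l s e ∧
    ∀ (i : ℕ) (h : i + 1 < l.length), G.BivAt (G.t (l.get ⟨i, Nat.lt_of_succ_lt h⟩))

/-- The underlying data of a combinatorial graph map `Γ → Λ`: a basepoint-preserving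
map on vertices-with-∞ and a map on arcs in the opposite direction. -/
structure PreMap (G H : CGraph) : Type where
  fv : Option G.V → Option H.V
  fa : H.A → G.A

/-- `FiberList f a l`: the list `l` enumerates `f_a⁻¹(a)` (without repetitions) and is
a bivalent path in the target graph between the images of the endpoints of `a`
(oriented so that the identity map is a graph map). -/
def FiberList {G H : CGraph} (f : PreMap G H) (a : G.A) (l : List H.A) : Prop :=
  (∀ b : H.A, b ∈ l ↔ f.fa b = a) ∧ l.Nodup ∧
    H.IsBivalentPath l (f.fv (G.t (G.dag a))) (f.fv (G.t a))

/-- `MidVertexOf H l w`: `w` occurs as an intermediate vertex of the path `l`. -/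
def MidVertexOf (H : CGraph) (l : List H.A) (w : H.V) : Prop :=
  ∃ (i : ℕ) (h : i + 1 < l.length), H.t (l.get ⟨i, Nat.lt_of_succ_lt h⟩) = some w

/-- `OnFiberPath f w a`: the vertex `w` of the target occurs as an intermediate vertex
of the bivalent path enumerating `f_a⁻¹(a)`. -/
def OnFiberPath {G H : CGraph} (f : PreMap G H) (w : H.V) (a : G.A) : Prop :=
  ∃ l : List H.A, FiberList f a l ∧ MidVertexOf H l w

/-- The conditions for a pair `(f_v, f_a)` to be a combinatorial graph map:
(1) `f_v(∞) = ∞`; (2) `f_a` commutes with `†`; (3) each `f_a⁻¹(a)` admits an ordering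
making it a bivalent path between the images of the endpoints of `a`; (4) vertices
identified by `f_v` are joined by a path of arcs outside the image of `f_a`;
(5) each vertex of the target not in the image of `f_v` is bivalent and occurs as an
intermediate vertex of exactly one of the bivalent paths from (3) (where the paths of
an arc and of its `†`-partner are regarded as the same path). -/
def IsGraphMap {G H : CGraph} (f : PreMap G H) : Prop :=
  f.fv none = none ∧
  (∀ b : H.A, f.fa (H.dag b) = G.dag (f.fa b)) ∧
  (∀ a : G.A, ∃ l : List H.A, FiberList f a l) ∧
  (∀ v v' : G.V, f.fv (some v) = f.fv (some v') → f.fv (some v) ≠ none →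
    ∃ l : List G.A, (∀ c ∈ l, c ∉ Set.range f.fa) ∧ G.IsPath l (some v) (some v')) ∧
  (∀ w : H.V, (∀ v : G.V, f.fv (some v) ≠ some w) →
    H.Bivalent w ∧ ∃ a : G.A, OnFiberPath f w a ∧
      ∀ a' : G.A, OnFiberPath f w a' → a' = a ∨ a' = G.dag a)

/-- The identity pre-map. -/
def PreMap.id (G : CGraph) : PreMap G G := ⟨fun x => x, fun a => a⟩

/-- Composition of pre-maps: `f` first, then `g`. -/
def PreMap.comp {G H K : CGraph} (f : PreMap G H) (g : PreMap H K) : PreMap G K :=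
  ⟨g.fv ∘ f.fv, f.fa ∘ g.fa⟩

/-- A combinatorial graph map is inert if `f_v⁻¹(w)` has exactly one element for every
vertex `w` of the target, and `f_a⁻¹(a)` is empty only when `f_v(t(a)) = ∞`. -/
def IsInert {G H : CGraph} (f : PreMap G H) : Prop :=
  (∀ w : H.V, ∃! v : G.V, f.fv (some v) = some w) ∧
  (∀ a : G.A, (∀ b : H.A, f.fa b ≠ a) → f.fv (G.t a) = none)

/-- A combinatorial graph map is active if `f_v⁻¹(∞) = {∞}` and none of the bivalent
paths `f_a⁻¹(a)` passes through `∞`. -/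
def IsActive {G H : CGraph} (f : PreMap G H) : Prop :=
  (∀ x : Option G.V, f.fv x = none → x = none) ∧
  (∀ (a : G.A) (l : List H.A), FiberList f a l →
    ∀ (i : ℕ) (h : i + 1 < l.length), H.t (l.get ⟨i, Nat.lt_of_succ_lt h⟩) ≠ none)

/-- An isomorphism of graphs: a graph map with a two-sided inverse graph map. -/
def IsGraphIso {G H : CGraph} (f : PreMap G H) : Prop :=
  IsGraphMap f ∧ ∃ g : PreMap H G, IsGraphMap g ∧
    f.comp g = PreMap.id G ∧ g.comp f = PreMap.id H

end CGraph

/-!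
Call an arc collapsed by `g` if its `g`-fiber is empty. The `f ∘ g`-fiber of an arc `a` is the
concatenation `l.flatMap L` of the `g`-fibers `L b` of the arcs `b` of the `f`-fiber `l` of `a`.
The crux is that in a connected graph an inner vertex of a fiber path is never an image vertex.
Consequently, at a junction vertex `w = g_v(t b)` of `l.flatMap L`, condition (4) for `g` puts
every `g`-preimage of `w` on the stretch of `l` between two consecutive arcs not collapsed by
`g`; the only arcs at `w` are then the last arcs of the `g`-fibers of these two arcs, so `w` is
bivalent. This gives (3), and together with (5) for `f` and `g` also (5). For (4), a path of
arcs collapsed by `g` between two `f`-images is followed through the `f`-fiber paths it enters: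
a fiber path that it crosses from end to end consists of arcs collapsed by `g`, so its arc is
collapsed by `f ∘ g`.
-/

namespace List

variable {α : Type*}

theorem exists_get_iff_exists_eq_append_cons_cons {l : List α} {P : α → Prop} :
    (∃ (i : ℕ) (h : i + 1 < l.length), P (l.get ⟨i, Nat.lt_of_succ_lt h⟩)) ↔
      ∃ A c d B, l = A ++ c :: d :: B ∧ P c := by
  constructor
  · rintro ⟨i, hi, hP⟩
    refine ⟨l.take i, l[i], l[i + 1], l.drop (i + 2), ?_, hP⟩
    rw [← List.drop_eq_getElem_cons hi, ← List.drop_eq_getElem_cons (by omega),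
      List.take_append_drop]
  · rintro ⟨A, c, d, B, rfl, hP⟩
    exact ⟨A.length, by simp, by simpa using hP⟩

theorem exists_eq_append_cons_of_first {p : α → Prop} {l : List α} (h : ∃ x ∈ l, p x) :
    ∃ S x Q, l = S ++ x :: Q ∧ p x ∧ ∀ y ∈ S, ¬ p y := by
  induction l with
  | nil => simp at h
  | cons a l ih =>
    by_cases ha : p a
    · exact ⟨[], a, l, rfl, ha, by simp⟩
    · obtain ⟨S, x, Q, rfl, hx, hS⟩ := ih (by simpa [ha] using h)
      exact ⟨a :: S, x, Q, rfl, hx, by simpa [ha] using hS⟩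

theorem exists_eq_append_cons_of_last {p : α → Prop} {l : List α} (h : ∃ x ∈ l, p x) :
    ∃ P x S, l = P ++ x :: S ∧ p x ∧ ∀ y ∈ S, ¬ p y := by
  obtain ⟨S, x, Q, hl, hx, hS⟩ := exists_eq_append_cons_of_first (l := l.reverse) (by simpa)
  exact ⟨Q.reverse, x, S.reverse, by simpa using congrArg reverse hl, hx, by simpa using hS⟩

theorem Nodup.eq_of_append_cons_eq {A B A' B' : List α} {c : α} (h : (A ++ c :: B).Nodup)
    (he : A ++ c :: B = A' ++ c :: B') : B = B' := by
  classical
  have hA : c ∉ A := fun hc => (nodup_middle.1 h |> nodup_cons.1).1 (mem_append_left _ hc)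
  have hA' : c ∉ A' := fun hc =>
    (nodup_middle.1 (he ▸ h) |> nodup_cons.1).1 (mem_append_left _ hc)
  have hlen : A.length = A'.length := by
    have := congrArg (idxOf c) he
    simpa [idxOf_append_of_notMem hA, idxOf_append_of_notMem hA'] using this
  simpa using (append_inj he hlen).2

theorem mem_or_eq_of_append_singleton_eq {S P Q : List α} {y z : α}
    (h : S ++ [y] = P ++ z :: Q) : z ∈ S ∨ Q = [] ∧ z = y := by
  obtain rfl | ⟨Q', q, rfl⟩ := Q.eq_nil_or_concat'
  · exact .inr ⟨rfl, (append_singleton_inj.1 h).2.symm⟩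
  · left
    rw [← cons_append, ← append_assoc, append_singleton_inj] at h
    simp [h.1]

theorem cons_append_singleton_eq_append_cons_cons {x y c d : α} {S A B : List α}
    (h : x :: (S ++ [y]) = A ++ c :: d :: B) :
    (A = [] ∧ c = x ∨ c ∈ S) ∧ (B = [] ∧ d = y ∨ d ∈ S) := by
  cases A with
  | nil =>
    simp only [nil_append, cons.injEq] at h
    obtain ⟨rfl, h⟩ := h
    exact ⟨.inl ⟨rfl, rfl⟩, (mem_or_eq_of_append_singleton_eq (P := []) h).symm⟩
  | cons a A =>
    obtain ⟨-, h⟩ := cons.inj h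
    refine ⟨.inr ?_, (mem_or_eq_of_append_singleton_eq (P := A ++ [c]) (by simpa using h)).symm⟩
    simpa using mem_or_eq_of_append_singleton_eq h

end List

namespace CGraph

variable {G H K : CGraph}

open Set

theorem dag_injective (G : CGraph) : Function.Injective G.dag :=
  Function.LeftInverse.injective G.dag_dag

theorem isPath_append_iff {l₁ l₂ : List G.A} {s e : Option G.V} :
    G.IsPath (l₁ ++ l₂) s e ↔ ∃ m, G.IsPath l₁ s m ∧ G.IsPath l₂ m e := by
  induction l₁ generalizing s with
  | nil => simp [IsPath]
  | cons c l ih => simp [IsPath, ih, and_assoc]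

theorem IsPath.append {l₁ l₂ : List G.A} {s m e : Option G.V} (h₁ : G.IsPath l₁ s m)
    (h₂ : G.IsPath l₂ m e) : G.IsPath (l₁ ++ l₂) s e :=
  isPath_append_iff.2 ⟨m, h₁, h₂⟩

theorem isPath_singleton {c : G.A} {s e : Option G.V} :
    G.IsPath [c] s e ↔ G.t (G.dag c) = s ∧ G.t c = e := by
  simp [IsPath, eq_comm]

theorem IsPath.t_of_append_singleton {l : List G.A} {c : G.A} {s e : Option G.V}
    (h : G.IsPath (l ++ [c]) s e) : G.t c = e := by
  obtain ⟨_, -, h⟩ := isPath_append_iff.1 h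
  exact (isPath_singleton.1 h).2

theorem IsPath.t_eq_t_dag {A B : List G.A} {c d : G.A} {s e : Option G.V}
    (h : G.IsPath (A ++ c :: d :: B) s e) : G.t c = G.t (G.dag d) := by
  obtain ⟨_, -, h⟩ := isPath_append_iff.1 h
  exact h.2.1.symm

theorem IsPath.target_mem {X : Set (Option G.V)} {l : List G.A} {s e : Option G.V}
    (h : G.IsPath l s e) (hX : ∀ b ∈ l, G.t (G.dag b) ∈ X → G.t b ∈ X) (hs : s ∈ X) :
    e ∈ X := by
  induction l generalizing s with
  | nil => exact h ▸ hs
  | cons c l ih =>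
    exact ih h.2 (fun b hb => hX b (.tail _ hb)) (hX c (.head _) (h.1 ▸ hs))

def JoinedOutside (G : CGraph) (S : Set G.A) (x y : Option G.V) : Prop :=
  ∃ l : List G.A, (∀ b ∈ l, b ∉ S) ∧ G.IsPath l x y

namespace JoinedOutside

variable {S : Set G.A} {x y z : Option G.V}

theorem refl (x : Option G.V) : G.JoinedOutside S x x := ⟨[], by simp, rfl⟩

theorem trans (h₁ : G.JoinedOutside S x y) (h₂ : G.JoinedOutside S y z) :
    G.JoinedOutside S x z := by
  obtain ⟨l₁, hl₁, hp₁⟩ := h₁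
  obtain ⟨l₂, hl₂, hp₂⟩ := h₂
  exact ⟨l₁ ++ l₂, by simpa [or_imp, forall_and] using And.intro hl₁ hl₂, hp₁.append hp₂⟩

theorem snoc {b : G.A} (h : G.JoinedOutside S x (G.t (G.dag b))) (hb : b ∉ S) :
    G.JoinedOutside S x (G.t b) :=
  h.trans ⟨[b], by simpa using hb, isPath_singleton.2 ⟨rfl, rfl⟩⟩

theorem mono {S' : Set G.A} (h : G.JoinedOutside S x y) (hS : S' ⊆ S) :
    G.JoinedOutside S' x y := by
  obtain ⟨l, hl, hp⟩ := h
  exact ⟨l, fun b hb hbS => hl b hb (hS hbS), hp⟩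

end JoinedOutside

theorem eq_or_eq_of_bivalent {x : G.V} (hx : G.Bivalent x) {c₁ c₂ c : G.A}
    (h₁ : G.t c₁ = some x) (h₂ : G.t c₂ = some x) (hne : c₂ ≠ c₁) (hc : G.t c = some x) :
    c = c₁ ∨ c = c₂ := by
  obtain ⟨y, -, hy⟩ := (Nat.card_eq_two_iff' (⟨c₁, h₁⟩ : {a // G.t a = some x})).1 hx
  by_contra! h
  have e₂ := hy ⟨c₂, h₂⟩ (by simpa [Subtype.ext_iff] using hne)
  have e := hy ⟨c, hc⟩ (by simpa [Subtype.ext_iff] using h.1)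
  exact h.2 (congrArg Subtype.val (e.trans e₂.symm))

theorem bivalent_of_forall_eq_or_eq {x : G.V} {c₁ c₂ : G.A} (h₁ : G.t c₁ = some x)
    (h₂ : G.t c₂ = some x) (hne : c₂ ≠ c₁)
    (hall : ∀ c, G.t c = some x → c = c₁ ∨ c = c₂) : G.Bivalent x := by
  refine (Nat.card_eq_two_iff' (⟨c₁, h₁⟩ : {a // G.t a = some x})).2
    ⟨⟨c₂, h₂⟩, by simpa [Subtype.ext_iff] using hne, fun ⟨c, hc⟩ hne' => ?_⟩
  have := (hall c hc).resolve_left (by simpa [Subtype.ext_iff] using hne')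
  simpa [Subtype.ext_iff] using this

theorem midVertexOf_iff {l : List G.A} {w : G.V} :
    G.MidVertexOf l w ↔ ∃ A c d B, l = A ++ c :: d :: B ∧ G.t c = some w :=
  List.exists_get_iff_exists_eq_append_cons_cons (P := fun c => G.t c = some w)

theorem midVertexOf_append {l₁ l₂ : List G.A} {s : Option G.V} {w : G.V}
    (h₁ : G.IsPath l₁ s (some w)) (hne₁ : l₁ ≠ []) (hne₂ : l₂ ≠ []) :
    G.MidVertexOf (l₁ ++ l₂) w := by
  obtain ⟨M, z, rfl⟩ := l₁.eq_nil_or_concat'.resolve_left hne₁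
  obtain ⟨d, B, rfl⟩ := List.ne_nil_iff_exists_cons.1 hne₂
  exact midVertexOf_iff.2 ⟨M, z, d, B, by simp, h₁.t_of_append_singleton⟩

theorem MidVertexOf.flatMap {L : G.A → List H.A} {l : List G.A} {b : G.A} {w : H.V}
    (h : H.MidVertexOf (L b) w) (hb : b ∈ l) : H.MidVertexOf (l.flatMap L) w := by
  obtain ⟨A, c, d, B, hs, hc⟩ := midVertexOf_iff.1 h
  obtain ⟨xs, ys, rfl⟩ := List.append_of_mem hb
  exact midVertexOf_iff.2 ⟨xs.flatMap L ++ A, c, d, B ++ ys.flatMap L, by simp [hs], hc⟩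

theorem isBivalentPath_iff {l : List G.A} {s e : Option G.V} :
    G.IsBivalentPath l s e ↔
      G.IsPath l s e ∧ ∀ A c d B, l = A ++ c :: d :: B → G.BivAt (G.t c) := by
  have := (List.exists_get_iff_exists_eq_append_cons_cons (l := l)
    (P := fun c => ¬ G.BivAt (G.t c))).not
  simp only [not_exists, not_and, not_not] at this
  exact and_congr_right' this

namespace IsBivalentPath

variable {l A B : List G.A} {c d : G.A} {s e : Option G.V} {x : G.V}

theorem bivAt (h : G.IsBivalentPath l s e) (hl : l = A ++ c :: d :: B) :
    G.BivAt (G.t c) :=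
  (isBivalentPath_iff.1 h).2 A c d B hl

theorem exists_middle {P M Q : List G.A} {p q : Option G.V}
    (h : G.IsBivalentPath (P ++ M ++ Q) p q) : ∃ p' q', G.IsBivalentPath M p' q' := by
  obtain ⟨m, hPM, -⟩ := isPath_append_iff.1 h.1
  obtain ⟨m', -, hM⟩ := isPath_append_iff.1 hPM
  exact ⟨m', m, isBivalentPath_iff.2 ⟨hM, fun A c d B hs =>
    h.bivAt (A := P ++ A) (c := c) (d := d) (B := B ++ Q) (by simp [hs])⟩⟩

theorem eq_or_eq_dag (h : G.IsBivalentPath l s e) (hdag : ∀ b ∈ l, G.dag b ∉ l)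
    (hl : l = A ++ c :: d :: B) (hx : G.t c = some x) {c' : G.A} (hc' : G.t c' = some x) :
    c' = c ∨ c' = G.dag d := by
  have hbiv : G.Bivalent x := by
    obtain h | ⟨v, hv, hbiv⟩ := h.bivAt hl
    · simp [hx] at h
    · exact (Option.some_injective _ (hx.symm.trans hv)) ▸ hbiv
  refine eq_or_eq_of_bivalent hbiv hx ?_ ?_ hc'
  · have hp : G.IsPath (A ++ c :: d :: B) s e := hl ▸ h.1
    rw [← hp.t_eq_t_dag, hx]
  · rintro hdc
    exact hdag d (by simp [hl]) (hdc ▸ by simp [hl])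

theorem target_ne_of_inner (h : G.IsBivalentPath l s e) (hnd : l.Nodup)
    (hdag : ∀ b ∈ l, G.dag b ∉ l) (hl : l = A ++ c :: d :: B) (hx : G.t c = some x) :
    e ≠ some x := by
  intro he
  obtain ⟨B', z, hB'⟩ : ∃ B' z, d :: B = B' ++ [z] :=
    ⟨_, _, (List.dropLast_concat_getLast (List.cons_ne_nil d B)).symm⟩
  have hl' : l = (A ++ c :: B') ++ [z] := by simp [hl, hB']
  have hp : G.IsPath ((A ++ c :: B') ++ [z]) s e := hl' ▸ h.1
  have hz : G.t z = some x := hp.t_of_append_singleton.trans he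
  have hzl : z ∈ d :: B := by simp [hB']
  rw [hl, List.nodup_middle, List.nodup_cons] at hnd
  rcases h.eq_or_eq_dag hdag hl hx hz with rfl | rfl
  · exact hnd.1 (List.mem_append_right _ hzl)
  · exact hdag d (by simp [hl]) (by simp [hl, hzl])

theorem source_ne_of_inner (h : G.IsBivalentPath l s e) (hnd : l.Nodup)
    (hdag : ∀ b ∈ l, G.dag b ∉ l) (hl : l = A ++ c :: d :: B) (hx : G.t c = some x) :
    s ≠ some x := by
  intro hs
  obtain ⟨z, A', hA'⟩ : ∃ z A', A ++ [c] = z :: A' := by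
    cases A <;> exact ⟨_, _, rfl⟩
  have hl' : l = z :: (A' ++ d :: B) := by
    rw [hl, ← List.cons_append, ← hA', List.append_assoc, List.singleton_append]
  have hp : G.IsPath (z :: (A' ++ d :: B)) s e := hl' ▸ h.1
  have hzl : z ∈ A ++ [c] := by simp [hA']
  rw [hl, ← List.singleton_append, ← List.append_assoc, List.nodup_append] at hnd
  rcases h.eq_or_eq_dag hdag hl hx (hp.1.trans hs) with h' | h'
  · exact hdag z (by simp [hl']) (by simp [h', hl])
  · exact hnd.2.2 z hzl d (by simp) (G.dag_injective h')

end IsBivalentPath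

theorem Connected.iff_of_touch_iff (hG : G.Connected) {S : G.V ⊕ G.A → Prop}
    (hS : ∀ p q, G.Touch p q → (S p ↔ S q)) (p q : G.V ⊕ G.A) : S p ↔ S q := by
  induction hG.2 p q with
  | rel p q h => exact hS p q h
  | refl => exact Iff.rfl
  | symm _ _ _ ih => exact ih.symm
  | trans _ _ _ _ _ ih₁ ih₂ => exact ih₁.trans ih₂

theorem Connected.exists_joinedOutside (hG : G.Connected) {R : Set G.A}
    (hR : ∀ b ∈ R, G.dag b ∈ R) {a : G.A} (ha : a ∈ R) (y : G.V) :
    ∃ b ∈ R, G.JoinedOutside R (some y) (G.t b) := by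
  by_contra! h
  let S : G.V ⊕ G.A → Prop
    | .inl z => G.JoinedOutside R (some y) (some z)
    | .inr b => G.JoinedOutside R (some y) (G.t b) ∨
        G.JoinedOutside R (some y) (G.t (G.dag b))
  have hS : ∀ p q, G.Touch p q → (S p ↔ S q) := by
    rintro _ _ (b | ⟨b, z, hbz⟩)
    · simp only [S, G.dag_dag, or_comm]
    · simp only [S, hbz]
      refine ⟨fun hb => hb.elim id fun hdb => ?_, .inl⟩
      have hb : b ∉ R := fun hb => h _ (hR b hb) hdb
      exact hbz ▸ hdb.snoc hb
  rcases (hG.iff_of_touch_iff hS (.inl y) (.inr a)).1 (.refl _) with h' | h'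
  · exact h a ha h'
  · exact h _ (hR a ha) h'

namespace FiberList

variable {f : PreMap G H} {a : G.A} {l : List H.A}

theorem fa_eq (hl : FiberList f a l) {b : H.A} (hb : b ∈ l) : f.fa b = a := (hl.1 b).1 hb

theorem mem (hl : FiberList f a l) {b : H.A} : b ∈ l ↔ f.fa b = a := hl.1 b

theorem nodup (hl : FiberList f a l) : l.Nodup := hl.2.1

theorem isBivalentPath (hl : FiberList f a l) :
    H.IsBivalentPath l (f.fv (G.t (G.dag a))) (f.fv (G.t a)) :=
  hl.2.2

theorem isPath (hl : FiberList f a l) : H.IsPath l (f.fv (G.t (G.dag a))) (f.fv (G.t a)) :=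
  hl.isBivalentPath.1

theorem ne_nil_iff (hl : FiberList f a l) : l ≠ [] ↔ a ∈ range f.fa := by
  rw [Ne, List.eq_nil_iff_forall_not_mem]
  simp [hl.mem]

end FiberList

/-- The conclusion of condition (5) in `IsGraphMap` at the vertex `w`. -/
def IsUniqueFiberInner (f : PreMap G H) (w : H.V) : Prop :=
  H.Bivalent w ∧ ∃ a, OnFiberPath f w a ∧ ∀ a', OnFiberPath f w a' → a' = a ∨ a' = G.dag a

namespace IsGraphMap

variable {f : PreMap G H} (hf : IsGraphMap f)
include hf

theorem fv_none : f.fv none = none := hf.1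

theorem fa_dag (b : H.A) : f.fa (H.dag b) = G.dag (f.fa b) := hf.2.1 b

theorem exists_fiberList (a : G.A) : ∃ l, FiberList f a l := hf.2.2.1 a

theorem joinedOutside {v v' : G.V} (h : f.fv (some v) = f.fv (some v'))
    (hne : f.fv (some v) ≠ none) : G.JoinedOutside (range f.fa) (some v) (some v') :=
  hf.2.2.2.1 v v' h hne

theorem isUniqueFiberInner {w : H.V} (hw : ∀ v, f.fv (some v) ≠ some w) :
    IsUniqueFiberInner f w :=
  hf.2.2.2.2 w hw

theorem exists_eq_some {x : Option G.V} {w : H.V} (h : f.fv x = some w) : ∃ v, x = some v :=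
  Option.ne_none_iff_exists'.1 fun hx => by simp [hx, hf.fv_none] at h

theorem dag_mem_range {a : G.A} (ha : a ∈ range f.fa) : G.dag a ∈ range f.fa := by
  obtain ⟨b, rfl⟩ := ha
  exact ⟨H.dag b, hf.fa_dag b⟩

theorem fv_t_dag_eq {a : G.A} (ha : a ∉ range f.fa) : f.fv (G.t (G.dag a)) = f.fv (G.t a) := by
  obtain ⟨m, hm⟩ := hf.exists_fiberList a
  obtain rfl : m = [] := not_not.1 (hm.ne_nil_iff.not.2 ha)
  exact hm.isPath

theorem fv_eq_of_joinedOutside {x y : Option G.V} (h : G.JoinedOutside (range f.fa) x y) :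
    f.fv x = f.fv y := by
  obtain ⟨l, hl, hp⟩ := h
  exact hp.target_mem (X := {z | f.fv x = f.fv z})
    (fun b hb hx => hx.trans (hf.fv_t_dag_eq (hl b hb))) rfl

theorem exists_fiberList_append_singleton {a : G.A} (ha : a ∈ range f.fa) :
    ∃ M z, FiberList f a (M ++ [z]) := by
  obtain ⟨m, hm⟩ := hf.exists_fiberList a
  obtain ⟨M, z, rfl⟩ := m.eq_nil_or_concat'.resolve_left (hm.ne_nil_iff.2 ha)
  exact ⟨M, z, hm⟩

theorem exists_fiberLists_eq {a₀ : G.A} {l₀ : List H.A} (hl₀ : FiberList f a₀ l₀) :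
    ∃ L : G.A → List H.A, (∀ a, FiberList f a (L a)) ∧ L a₀ = l₀ := by
  classical
  choose L hL using hf.exists_fiberList
  refine ⟨Function.update L a₀ l₀, fun a => ?_, by simp⟩
  rcases eq_or_ne a a₀ with rfl | ha
  · simpa using hl₀
  · simpa [ha] using hL a

end IsGraphMap

namespace FiberList

variable {f : PreMap G H} {a : G.A} {l : List H.A}

theorem dag_not_mem (hf : IsGraphMap f) (hl : FiberList f a l) :
    ∀ b ∈ l, H.dag b ∉ l := by
  intro b hb hdb
  rw [hl.mem, hf.fa_dag, hl.fa_eq hb] at hdb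
  exact G.dag_ne a hdb

theorem fa_eq_or_eq_dag (hf : IsGraphMap f) (hl : FiberList f a l) {A B : List H.A}
    {c d : H.A} (hs : l = A ++ c :: d :: B) {x : H.V} (hx : H.t c = some x) {c' : H.A}
    (hc' : H.t c' = some x) : f.fa c' = a ∨ f.fa c' = G.dag a := by
  rcases hl.isBivalentPath.eq_or_eq_dag (hl.dag_not_mem hf) hs hx hc' with rfl | rfl
  · exact .inl (hl.fa_eq (by simp [hs]))
  · exact .inr (by rw [hf.fa_dag, hl.fa_eq (by simp [hs])])

/-- If `f_v(y) = x`, connectedness gives an arc `b` in the image of `f_a` whose end is joined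
to `y` outside that image, so `f_v(t b) = x`. The last arc of the fiber of `b` then ends at `x`,
hence is one of the two arcs of `l` at `x`, and this forces an endpoint of `l` to be `x`. -/
theorem fv_ne_of_inner (hG : G.Connected) (hf : IsGraphMap f) (hl : FiberList f a l)
    {A B : List H.A} {c d : H.A} (hs : l = A ++ c :: d :: B) {x : H.V} (hx : H.t c = some x)
    (y : G.V) : f.fv (some y) ≠ some x := by
  intro hy
  obtain ⟨b, hbR, hyb⟩ := hG.exists_joinedOutside (fun b => hf.dag_mem_range)
    (hl.ne_nil_iff.1 (by simp [hs])) y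
  have hb : f.fv (G.t b) = some x := (hf.fv_eq_of_joinedOutside hyb).symm.trans hy
  obtain ⟨M, z, hm⟩ := hf.exists_fiberList_append_singleton hbR
  have hz : H.t z = some x := hm.isPath.t_of_append_singleton.trans hb
  rcases hl.fa_eq_or_eq_dag hf hs hx hz with h | h <;> rw [hm.fa_eq (by simp)] at h <;> subst h
  · exact hl.isBivalentPath.target_ne_of_inner hl.nodup (hl.dag_not_mem hf) hs hx hb
  · exact hl.isBivalentPath.source_ne_of_inner hl.nodup (hl.dag_not_mem hf) hs hx hb

theorem midVertexOf_of_mem (hf : IsGraphMap f) (hl : FiberList f a l) {c : H.A} (hc : c ∈ l)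
    {w : H.V} (hcw : H.t c = some w) (hw : ∀ v, f.fv (some v) ≠ some w) : H.MidVertexOf l w := by
  obtain ⟨A, _ | ⟨d, B⟩, rfl⟩ := List.append_of_mem hc
  · have hta : f.fv (G.t a) = some w := hl.isPath.t_of_append_singleton.symm.trans hcw
    obtain ⟨v, hv⟩ := hf.exists_eq_some hta
    exact absurd (hv ▸ hta) (hw v)
  · exact midVertexOf_iff.2 ⟨A, c, d, B, rfl, hcw⟩

theorem exists_eq_append_singleton (hG : G.Connected) (hf : IsGraphMap f)
    (hl : FiberList f a l) {c : H.A} (hc : c ∈ l) {x : H.V} (hcx : H.t c = some x) {y : G.V}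
    (hy : f.fv (some y) = some x) : ∃ M, l = M ++ [c] := by
  obtain ⟨A, _ | ⟨d, B⟩, hs⟩ := List.append_of_mem hc
  · exact ⟨A, hs⟩
  · exact absurd hy (hl.fv_ne_of_inner hG hf hs hcx y)

theorem fv_t_eq_of_mem (hG : G.Connected) (hf : IsGraphMap f) (hl : FiberList f a l)
    {c : H.A} (hc : c ∈ l) {x : H.V} (hcx : H.t c = some x) {y : G.V}
    (hy : f.fv (some y) = some x) : f.fv (G.t a) = some x := by
  obtain ⟨M, rfl⟩ := hl.exists_eq_append_singleton hG hf hc hcx hy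
  exact hl.isPath.t_of_append_singleton.symm.trans hcx

theorem eq_of_eq_append_singleton (hG : G.Connected) (hf : IsGraphMap f)
    (hl : FiberList f a l) {M : List H.A} {z : H.A} (hlz : l = M ++ [z]) {c : H.A} (hc : c ∈ l)
    {x : H.V} (hcx : H.t c = some x) {y : G.V} (hy : f.fv (some y) = some x) : c = z := by
  obtain ⟨M', hM'⟩ := hl.exists_eq_append_singleton hG hf hc hcx hy
  exact (List.append_singleton_inj.1 (hM'.symm.trans hlz)).2

end FiberList

section Stretch

variable {g : PreMap H K} {b₁ b₂ : H.A} {S : List H.A} {p q : Option H.V} {w : K.V}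

theorem joinedOutside_of_stretch (hseg : H.IsPath (b₁ :: (S ++ [b₂])) p q)
    (hS : ∀ b ∈ S, b ∉ range g.fa) :
    H.JoinedOutside (range g.fa) (H.t b₁) (H.t (H.dag b₂)) := by
  obtain ⟨m, hS', hb₂⟩ := isPath_append_iff.1 hseg.2
  exact (isPath_singleton.1 hb₂).1 ▸ ⟨S, hS, hS'⟩

theorem exists_inner_of_stretch (hg : IsGraphMap g)
    (hseg : H.IsBivalentPath (b₁ :: (S ++ [b₂])) p q)
    (hdag : ∀ b ∈ b₁ :: (S ++ [b₂]), H.dag b ∉ b₁ :: (S ++ [b₂]))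
    (hb₁ : b₁ ∈ range g.fa) (hb₂ : b₂ ∈ range g.fa) {A B : List H.A} {c d : H.A}
    (hs : b₁ :: (S ++ [b₂]) = A ++ c :: d :: B) {e : H.A} (he : e ∉ range g.fa)
    (hc : H.t c = H.t (H.dag e)) (hne : H.t c ≠ none) :
    ∃ A c d B, b₁ :: (S ++ [b₂]) = A ++ c :: d :: B ∧ H.t c = H.t e := by
  obtain ⟨v, hv⟩ := Option.ne_none_iff_exists'.1 hne
  rcases hseg.eq_or_eq_dag hdag hs hv (hc.symm.trans hv) with h | h
  · have hcR : c ∉ range g.fa := fun hcR =>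
      he (by simpa [← h, H.dag_dag] using hg.dag_mem_range hcR)
    obtain rfl | ⟨A, c', rfl⟩ := A.eq_nil_or_concat'
    · obtain ⟨rfl, -⟩ := List.cons.inj hs
      exact absurd hb₁ hcR
    · refine ⟨A, c', c, d :: B, by simp [hs], ?_⟩
      have hp : H.IsPath (A ++ c' :: c :: d :: B) p q := by simpa [hs] using hseg.1
      rw [hp.t_eq_t_dag, ← h, H.dag_dag]
  · obtain rfl := H.dag_injective h
    obtain _ | ⟨d', B⟩ := B
    · have hlast : (b₁ :: S) ++ [b₂] = (A ++ [c]) ++ [e] := by simpa using hs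
      exact absurd ((List.append_singleton_inj.1 hlast).2 ▸ hb₂) he
    · exact ⟨A ++ [c], e, d', B, by simp [hs], rfl⟩

/-- By (4) for `g`, every preimage of `w` is reached from `t b₁` along arcs collapsed by `g`,
and these never leave the inner vertices of the stretch. -/
theorem eq_or_eq_dag_of_stretch (hg : IsGraphMap g)
    (hseg : H.IsBivalentPath (b₁ :: (S ++ [b₂])) p q)
    (hdag : ∀ b ∈ b₁ :: (S ++ [b₂]), H.dag b ∉ b₁ :: (S ++ [b₂]))
    (hb₁ : b₁ ∈ range g.fa) (hb₂ : b₂ ∈ range g.fa) (hS : ∀ b ∈ S, b ∉ range g.fa)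
    (hw : g.fv (H.t b₁) = some w) {b : H.A} (hb : b ∈ range g.fa)
    (hbw : g.fv (H.t b) = some w) : b = b₁ ∨ b = H.dag b₂ := by
  let X : Set (Option H.V) := {x | g.fv x = some w ∧
    ∃ A c d B, b₁ :: (S ++ [b₂]) = A ++ c :: d :: B ∧ H.t c = x}
  have hX : ∀ e ∈ (range g.fa)ᶜ, H.t (H.dag e) ∈ X → H.t e ∈ X := by
    rintro e he ⟨hgx, A, c, d, B, hs, hc⟩
    refine ⟨(hg.fv_t_dag_eq he).symm.trans hgx, exists_inner_of_stretch hg hseg hdag hb₁ hb₂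
      hs he hc (hc ▸ fun h => by simp [h, hg.fv_none] at hgx)⟩
  obtain ⟨u₁, hu₁⟩ := hg.exists_eq_some hw
  obtain ⟨u, hu⟩ := hg.exists_eq_some hbw
  have hbase : H.t b₁ ∈ X := by
    obtain ⟨d, B, hdB⟩ := List.ne_nil_iff_exists_cons.1 (show S ++ [b₂] ≠ [] by simp)
    exact ⟨hw, [], b₁, d, B, by simp [hdB], rfl⟩
  obtain ⟨l, hl, hpath⟩ := hg.joinedOutside (v := u₁) (v' := u)
    (by rw [← hu₁, ← hu, hw, hbw]) (by simp [← hu₁, hw])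
  obtain ⟨-, A, c, d, B, hs, hc⟩ := hpath.target_mem (fun e he => hX e (hl e he)) (hu₁ ▸ hbase)
  have hpos := List.cons_append_singleton_eq_append_cons_cons hs
  rcases hseg.eq_or_eq_dag hdag hs hc hu with rfl | rfl
  · exact .inl (hpos.1.resolve_right (hS b · hb)).2
  · have hd : d ∈ range g.fa := by simpa [H.dag_dag] using hg.dag_mem_range hb
    exact .inr (by rw [(hpos.2.resolve_right (hS d · hd)).2])

theorem bivalent_of_stretch (hH : H.Connected) (hg : IsGraphMap g)
    (hseg : H.IsBivalentPath (b₁ :: (S ++ [b₂])) p q)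
    (hdag : ∀ b ∈ b₁ :: (S ++ [b₂]), H.dag b ∉ b₁ :: (S ++ [b₂]))
    (hb₁ : b₁ ∈ range g.fa) (hb₂ : b₂ ∈ range g.fa) (hS : ∀ b ∈ S, b ∉ range g.fa)
    (hw : g.fv (H.t b₁) = some w) :
    K.Bivalent w ∧ ∀ c, K.t c = some w → g.fa c = b₁ ∨ g.fa c = H.dag b₂ := by
  obtain ⟨u₁, hu₁⟩ := hg.exists_eq_some hw
  have hu₁w : g.fv (some u₁) = some w := hu₁ ▸ hw
  have hfa : ∀ c, K.t c = some w → g.fa c = b₁ ∨ g.fa c = H.dag b₂ := fun c hc => by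
    obtain ⟨m, hm⟩ := hg.exists_fiberList (g.fa c)
    exact eq_or_eq_dag_of_stretch hg hseg hdag hb₁ hb₂ hS hw ⟨c, rfl⟩
      (hm.fv_t_eq_of_mem hH hg (hm.mem.2 rfl) hc hu₁w)
  obtain ⟨M₁, z₁, hm₁⟩ := hg.exists_fiberList_append_singleton hb₁
  obtain ⟨M₂, z₂, hm₂⟩ := hg.exists_fiberList_append_singleton (hg.dag_mem_range hb₂)
  have ht₁ : K.t z₁ = some w := hm₁.isPath.t_of_append_singleton.trans hw
  have ht₂ : K.t z₂ = some w := hm₂.isPath.t_of_append_singleton.trans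
    ((hg.fv_eq_of_joinedOutside (joinedOutside_of_stretch hseg.1 hS)).symm.trans hw)
  have hne : z₂ ≠ z₁ := fun h => hdag b₂ (by simp) <| by
    rw [← hm₂.fa_eq (b := z₂) (by simp), h, hm₁.fa_eq (by simp)]
    simp
  refine ⟨bivalent_of_forall_eq_or_eq ht₁ ht₂ hne fun c hc => (hfa c hc).imp ?_ ?_, hfa⟩
  · exact fun h => hm₁.eq_of_eq_append_singleton hH hg rfl (hm₁.mem.2 h) hc hu₁w
  · exact fun h => hm₂.eq_of_eq_append_singleton hH hg rfl (hm₂.mem.2 h) hc hu₁w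

end Stretch

theorem bivalent_of_junction {g : PreMap H K} (hH : H.Connected) (hg : IsGraphMap g)
    {l xs ys : List H.A} {c₀ : H.A} {p q : Option H.V} {w : K.V}
    (hl : H.IsBivalentPath l p q) (hdag : ∀ b ∈ l, H.dag b ∉ l) (hs : l = xs ++ c₀ :: ys)
    (hw : g.fv (H.t c₀) = some w) (h₁ : ∃ b ∈ xs ++ [c₀], b ∈ range g.fa)
    (h₂ : ∃ b ∈ ys, b ∈ range g.fa) :
    K.Bivalent w ∧ ∀ c, K.t c = some w → g.fa c ∈ l ∨ H.dag (g.fa c) ∈ l := by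
  obtain ⟨P, b₁, S₁, hP, hb₁, hS₁⟩ := List.exists_eq_append_cons_of_last h₁
  obtain ⟨S₂, b₂, Q, hQ, hb₂, hS₂⟩ := List.exists_eq_append_cons_of_first h₂
  have hl' : l = P ++ b₁ :: (S₁ ++ S₂ ++ [b₂]) ++ Q := by
    rw [hs, ← List.singleton_append, ← List.append_assoc, hP, hQ]
    simp
  have hsub : ∀ b ∈ b₁ :: (S₁ ++ S₂ ++ [b₂]), b ∈ l := fun b hb => by
    rw [hl']
    exact List.mem_append_left _ (List.mem_append_right _ hb)
  obtain ⟨p', q', hseg⟩ := (hl' ▸ hl).exists_middle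
  have hw₁ : g.fv (H.t b₁) = some w := by
    obtain ⟨m, hxs, -⟩ := isPath_append_iff.1 (by simpa [hs] using hl.1 :
      H.IsPath ((xs ++ [c₀]) ++ ys) p q)
    obtain ⟨m', hPb, hS₁p⟩ := isPath_append_iff.1 (by simpa [hP] using hxs :
      H.IsPath ((P ++ [b₁]) ++ S₁) p m)
    rw [hxs.t_of_append_singleton] at hw
    rw [← hPb.t_of_append_singleton] at hS₁p
    exact (hg.fv_eq_of_joinedOutside ⟨S₁, hS₁, hS₁p⟩).trans hw
  obtain ⟨hbiv, hfa⟩ := bivalent_of_stretch hH hg hseg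
    (fun b hb hdb => hdag b (hsub b hb) (hsub _ hdb)) hb₁ hb₂
    (by simpa [or_imp, forall_and] using And.intro hS₁ hS₂) hw₁
  refine ⟨hbiv, fun c hc => (hfa c hc).imp (fun h => ?_) fun h => ?_⟩
  · exact h ▸ hsub _ (by simp)
  · rw [h, H.dag_dag]
    exact hsub _ (by simp)

section FlatMap

variable {f : PreMap G H} {g : PreMap H K} {L : H.A → List K.A}

theorem isPath_flatMap (hL : ∀ b, FiberList g b (L b)) {l : List H.A} {s e : Option H.V}
    (hl : H.IsPath l s e) : K.IsPath (l.flatMap L) (g.fv s) (g.fv e) := by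
  induction l generalizing s with
  | nil => exact congrArg g.fv hl
  | cons b l ih => exact (hl.1 ▸ (hL b).isPath).append (ih hl.2)

theorem nodup_flatMap_of_fiberList (hL : ∀ b, FiberList g b (L b)) {l : List H.A}
    (hl : l.Nodup) : (l.flatMap L).Nodup :=
  List.nodup_flatMap.2 ⟨fun b _ => (hL b).nodup, hl.pairwise_of_forall_ne fun b _ b' _ hne =>
    List.disjoint_left.2 fun _ hc hc' => hne ((hL b).fa_eq hc ▸ (hL b').fa_eq hc')⟩

theorem bivAt_of_flatMap (hH : H.Connected) (hf : IsGraphMap f) (hg : IsGraphMap g)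
    (hL : ∀ b, FiberList g b (L b)) {a : G.A} {l : List H.A} (hl : FiberList f a l)
    {A B : List K.A} {c d : K.A} (hs : l.flatMap L = A ++ c :: d :: B) : K.BivAt (K.t c) := by
  rcases hcw : K.t c with _ | w
  · exact .inl rfl
  by_cases hw : ∀ u, g.fv (some u) ≠ some w
  · exact .inr ⟨w, rfl, (hg.isUniqueFiberInner hw).1⟩
  obtain ⟨u, hu⟩ := not_forall_not.1 hw
  obtain ⟨b, hb, hcb⟩ := List.mem_flatMap.1 (show c ∈ l.flatMap L by simp [hs])
  obtain ⟨M, hM⟩ := (hL b).exists_eq_append_singleton hH hg hcb hcw hu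
  obtain ⟨xs, ys, hxs⟩ := List.append_of_mem hb
  have hsplit : l.flatMap L = (xs.flatMap L ++ M) ++ c :: ys.flatMap L := by simp [hxs, hM]
  have hys : d :: B = ys.flatMap L :=
    (hs ▸ nodup_flatMap_of_fiberList hL hl.nodup).eq_of_append_cons_eq (hs.symm.trans hsplit)
  obtain ⟨b', hb', hb'ne⟩ : ∃ b' ∈ ys, L b' ≠ [] := by
    by_contra! h
    simp [List.flatMap_eq_nil_iff.2 h] at hys
  exact .inr ⟨w, rfl, (bivalent_of_junction hH hg hl.isBivalentPath (hl.dag_not_mem hf) hxs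
    ((hL b).fv_t_eq_of_mem hH hg hcb hcw hu)
    ⟨b, by simp, (hL b).ne_nil_iff.1 (by simp [hM])⟩ ⟨b', hb', (hL b').ne_nil_iff.1 hb'ne⟩).1⟩

theorem FiberList.flatMap (hH : H.Connected) (hf : IsGraphMap f) (hg : IsGraphMap g)
    (hL : ∀ b, FiberList g b (L b)) {a : G.A} {l : List H.A} (hl : FiberList f a l) :
    FiberList (f.comp g) a (l.flatMap L) := by
  refine ⟨fun c => ?_, nodup_flatMap_of_fiberList hL hl.nodup, isBivalentPath_iff.2
    ⟨isPath_flatMap hL hl.isPath, fun A c d B => bivAt_of_flatMap hH hf hg hL hl⟩⟩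
  simp only [List.mem_flatMap, PreMap.comp, Function.comp_apply]
  exact ⟨fun ⟨b, hb, hc⟩ => (hL b).fa_eq hc ▸ hl.fa_eq hb,
    fun h => ⟨g.fa c, hl.mem.2 h, (hL _).mem.2 rfl⟩⟩

end FlatMap

/-- The invariant along a path of arcs collapsed by `g` that starts at `f_v(v)`: the current
vertex is the image of a vertex joined to `v` outside the image of `(f ∘ g)_a`, or an inner
vertex of a fiber path `Lf a` entered from its source through arcs all collapsed by `g`. -/
def CompReached (f : PreMap G H) (g : PreMap H K) (Lf : G.A → List H.A) (v : G.V)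
    (x : Option H.V) : Prop :=
  (∃ y, G.JoinedOutside (range (f.comp g).fa) (some v) y ∧ f.fv y = x) ∨
    ∃ a A c d B, Lf a = A ++ c :: d :: B ∧ H.t c = x ∧
      G.JoinedOutside (range (f.comp g).fa) (some v) (G.t (G.dag a)) ∧
      ∀ b ∈ A ++ [c], b ∉ range g.fa

section Comp

variable {f : PreMap G H} {g : PreMap H K} {Lf : G.A → List H.A} {v : G.V} {e : H.A} {w : K.V}

theorem range_comp_fa_subset : range (f.comp g).fa ⊆ range f.fa := by
  rintro _ ⟨c, rfl⟩
  exact ⟨g.fa c, rfl⟩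

theorem FiberList.not_mem_range_comp {a : G.A} {l : List H.A} (hl : FiberList f a l)
    (h : ∀ b ∈ l, b ∉ range g.fa) : a ∉ range (f.comp g).fa := by
  rintro ⟨c, hc⟩
  exact h (g.fa c) (hl.mem.2 hc) ⟨c, rfl⟩

theorem compReached_of_image (hG : G.Connected) (hf : IsGraphMap f)
    (hLf : ∀ a, FiberList f a (Lf a)) {y : Option G.V}
    (hy : G.JoinedOutside (range (f.comp g).fa) (some v) y) (hfy : f.fv y = H.t (H.dag e))
    (hne : H.t (H.dag e) ≠ none) (he : e ∉ range g.fa) : CompReached f g Lf v (H.t e) := by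
  obtain ⟨x, hx⟩ := Option.ne_none_iff_exists'.1 hne
  obtain ⟨y, rfl⟩ := hf.exists_eq_some (hfy.trans hx)
  obtain ⟨A, rest, hs⟩ := List.append_of_mem ((hLf (f.fa e)).mem.2 rfl)
  obtain rfl | ⟨A, c, rfl⟩ := A.eq_nil_or_concat'
  · have hp := hs ▸ (hLf (f.fa e)).isPath
    obtain ⟨v₀, hv₀⟩ := hf.exists_eq_some (hp.1.symm.trans hx)
    have hda : G.JoinedOutside (range (f.comp g).fa) (some v) (G.t (G.dag (f.fa e))) := by
      rw [hv₀]
      refine hy.trans ((hf.joinedOutside ?_ (by simp [hfy, hx])).mono range_comp_fa_subset)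
      rw [hfy, ← hv₀, ← hp.1]
    cases rest with
    | nil =>
      exact .inl ⟨_, hda.snoc ((hLf _).not_mem_range_comp (by simpa [hs] using he)),
        (isPath_singleton.1 hp).2.symm⟩
    | cons d B => exact .inr ⟨_, [], e, d, B, hs, rfl, hda, by simpa using he⟩
  · simp only [List.append_assoc, List.singleton_append] at hs
    have hp := (hLf (f.fa e)).isPath
    rw [hs] at hp
    exact absurd (hfy.trans hx) ((hLf _).fv_ne_of_inner hG hf hs (hp.t_eq_t_dag.trans hx) y)

theorem compReached_of_inner (hf : IsGraphMap f) (hLf : ∀ a, FiberList f a (Lf a))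
    {a : G.A} {A B : List H.A} {c d : H.A} (hs : Lf a = A ++ c :: d :: B)
    (hc : H.t c = H.t (H.dag e)) (hne : H.t c ≠ none)
    (ha : G.JoinedOutside (range (f.comp g).fa) (some v) (G.t (G.dag a)))
    (hA : ∀ b ∈ A ++ [c], b ∉ range g.fa) (he : e ∉ range g.fa) :
    CompReached f g Lf v (H.t e) := by
  obtain ⟨x, hx⟩ := Option.ne_none_iff_exists'.1 hne
  have hp := (hLf a).isPath
  rw [hs] at hp
  rcases (hLf a).isBivalentPath.eq_or_eq_dag ((hLf a).dag_not_mem hf) hs hx (hc.symm.trans hx)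
    with h | h
  · have hte : H.t e = H.t (H.dag c) := by rw [← h, H.dag_dag]
    obtain rfl | ⟨A, c', rfl⟩ := A.eq_nil_or_concat'
    · exact .inl ⟨_, ha, hp.1.symm.trans hte.symm⟩
    · refine .inr ⟨a, A, c', c, d :: B, by simp [hs], ?_, ha,
        fun b hb => hA b (List.mem_append_left _ hb)⟩
      simp only [List.append_assoc, List.singleton_append] at hp
      exact hp.t_eq_t_dag.trans hte.symm
  · obtain rfl := H.dag_injective h
    have hAe : ∀ b ∈ (A ++ [c]) ++ [e], b ∉ range g.fa := fun b hb =>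
      (List.mem_append.1 hb).elim (hA b) fun h => List.mem_singleton.1 h ▸ he
    cases B with
    | nil =>
      exact .inl ⟨_, ha.snoc ((hLf a).not_mem_range_comp (by simpa [hs] using hAe)),
        (by simpa using hp : H.IsPath ((A ++ [c]) ++ [e]) _ _).t_of_append_singleton.symm⟩
    | cons d' B => exact .inr ⟨a, A ++ [c], e, d', B, by simp [hs], rfl, ha, hAe⟩

theorem joinedOutside_comp (hG : G.Connected) (hf : IsGraphMap f) (hg : IsGraphMap g)
    {v' : G.V} (h : (f.comp g).fv (some v) = (f.comp g).fv (some v'))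
    (hne : (f.comp g).fv (some v) ≠ none) :
    G.JoinedOutside (range (f.comp g).fa) (some v) (some v') := by
  choose Lf hLf using hf.exists_fiberList
  obtain ⟨w, hw⟩ := Option.ne_none_iff_exists'.1 hne
  change g.fv (f.fv (some v)) = some w at hw
  obtain ⟨u, hu⟩ := hg.exists_eq_some hw
  obtain ⟨u', hu'⟩ := hg.exists_eq_some (h ▸ hw : g.fv (f.fv (some v')) = some w)
  rw [hu] at hw
  obtain ⟨l, hl, hp⟩ := hg.joinedOutside (v := u) (v' := u')
    (by rw [← hu, ← hu']; exact h) (by simp [hw])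
  have hreach : g.fv (some u') = some w ∧ CompReached f g Lf v (some u') := by
    refine hp.target_mem (X := {x | g.fv x = some w ∧ CompReached f g Lf v x})
      (fun e he ⟨hgx, hx⟩ => ⟨(hg.fv_t_dag_eq (hl e he)).symm.trans hgx, ?_⟩)
      ⟨hw, .inl ⟨_, .refl _, hu⟩⟩
    have hne' : H.t (H.dag e) ≠ none := fun h' => by simp [h', hg.fv_none] at hgx
    obtain ⟨y, hy, hfy⟩ | ⟨a, A, c, d, B, hs, hc, ha, hA⟩ := hx
    · exact compReached_of_image hG hf hLf hy hfy hne' (hl e he)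
    · exact compReached_of_inner hf hLf hs hc (hc ▸ hne') ha hA (hl e he)
  obtain ⟨-, ⟨y, hy, hfy⟩ | ⟨a, A, c, d, B, hs, hc, -⟩⟩ := hreach
  · obtain ⟨y, rfl⟩ := hf.exists_eq_some hfy
    exact hy.trans ((hf.joinedOutside (hfy.trans hu'.symm) (by simp [hfy])).mono
      range_comp_fa_subset)
  · exact absurd hu' ((hLf a).fv_ne_of_inner hG hf hs hc v')

theorem isUniqueFiberInner_comp_of_forall_fv_ne (hH : H.Connected) (hf : IsGraphMap f)
    (hg : IsGraphMap g) (hw : ∀ u, g.fv (some u) ≠ some w) : IsUniqueFiberInner (f.comp g) w := by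
  obtain ⟨hbiv, b₀, ⟨l₀, hl₀, hmid⟩, huniq⟩ := hg.isUniqueFiberInner hw
  refine ⟨hbiv, f.fa b₀, ?_, ?_⟩
  · obtain ⟨L, hL, hLb₀⟩ := hg.exists_fiberLists_eq hl₀
    obtain ⟨lf, hlf⟩ := hf.exists_fiberList (f.fa b₀)
    exact ⟨lf.flatMap L, hlf.flatMap hH hf hg hL, (hLb₀ ▸ hmid).flatMap (hlf.mem.2 rfl)⟩
  · rintro a' ⟨l', hl', hmid'⟩
    obtain ⟨A, c, d, B, hs, hc⟩ := midVertexOf_iff.1 hmid'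
    obtain ⟨m, hm⟩ := hg.exists_fiberList (g.fa c)
    have ha' : f.fa (g.fa c) = a' := hl'.fa_eq (by simp [hs])
    rcases huniq _ ⟨m, hm, hm.midVertexOf_of_mem hg (hm.mem.2 rfl) hc hw⟩ with h | h
    · exact .inl (by rw [← ha', h])
    · exact .inr (by rw [← ha', h, hf.fa_dag])

theorem fv_comp_ne_some (hf : IsGraphMap f) (hg : IsGraphMap g)
    (hw : ∀ v, (f.comp g).fv (some v) ≠ some w) (x : Option G.V) : g.fv (f.fv x) ≠ some w :=
  fun h => by
    obtain ⟨u, hu⟩ := hg.exists_eq_some h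
    obtain ⟨v, rfl⟩ := hf.exists_eq_some hu
    exact hw v h

theorem isUniqueFiberInner_comp_of_fv_eq (hH : H.Connected) (hf : IsGraphMap f)
    (hg : IsGraphMap g) {u : H.V} (hu : g.fv (some u) = some w)
    (hw : ∀ v, (f.comp g).fv (some v) ≠ some w) : IsUniqueFiberInner (f.comp g) w := by
  have hgf := fv_comp_ne_some hf hg hw
  obtain ⟨-, a, ⟨lf, hlf, hmid⟩, -⟩ := hf.isUniqueFiberInner fun v h => hgf (some v) (h ▸ hu)
  obtain ⟨xs, c₀, d, B, hs, hc₀⟩ := midVertexOf_iff.1 hmid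
  have hwc₀ : g.fv (H.t c₀) = some w := hc₀ ▸ hu
  obtain ⟨m, hpre, hpost⟩ := isPath_append_iff.1
    (by simpa [hs] using hlf.isPath : H.IsPath ((xs ++ [c₀]) ++ d :: B) _ _)
  obtain rfl := hpre.t_of_append_singleton
  have hpre' : ∃ b ∈ xs ++ [c₀], b ∈ range g.fa := by
    by_contra! h
    exact hgf _ ((hg.fv_eq_of_joinedOutside ⟨_, h, hpre⟩).trans hwc₀)
  have hpost' : ∃ b ∈ d :: B, b ∈ range g.fa := by
    by_contra! h
    exact hgf _ ((hg.fv_eq_of_joinedOutside ⟨_, h, hpost⟩).symm.trans hwc₀)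
  choose L hL using hg.exists_fiberList
  have hne : ∀ {l : List H.A}, (∃ b ∈ l, b ∈ range g.fa) → l.flatMap L ≠ [] :=
    fun ⟨b, hb, hbR⟩ h => (hL b).ne_nil_iff.2 hbR (List.flatMap_eq_nil_iff.1 h b hb)
  obtain ⟨hbiv, hfa⟩ :=
    bivalent_of_junction hH hg hlf.isBivalentPath (hlf.dag_not_mem hf) hs hwc₀ hpre' hpost'
  refine ⟨hbiv, a, ⟨lf.flatMap L, hlf.flatMap hH hf hg hL, ?_⟩, ?_⟩
  · have hsplit : lf.flatMap L = (xs ++ [c₀]).flatMap L ++ (d :: B).flatMap L := by simp [hs]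
    rw [hsplit]
    exact midVertexOf_append (hwc₀ ▸ isPath_flatMap hL hpre) (hne hpre') (hne hpost')
  · rintro a' ⟨l', hl', hmid'⟩
    obtain ⟨A, c, _, _, hs', hc⟩ := midVertexOf_iff.1 hmid'
    have ha' : f.fa (g.fa c) = a' := hl'.fa_eq (by simp [hs'])
    rcases hfa c hc with h | h
    · exact .inl (ha' ▸ hlf.fa_eq h)
    · refine .inr ?_
      rw [← hlf.fa_eq h, hf.fa_dag, ha', G.dag_dag]

theorem IsGraphMap.comp (hG : G.Connected) (hH : H.Connected) (hf : IsGraphMap f)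
    (hg : IsGraphMap g) : IsGraphMap (f.comp g) := by
  refine ⟨by simp [PreMap.comp, hf.fv_none, hg.fv_none],
    fun c => by simp [PreMap.comp, hg.fa_dag, hf.fa_dag], fun a => ?_,
    fun v v' => joinedOutside_comp hG hf hg, fun w hw => ?_⟩
  · choose L hL using hg.exists_fiberList
    obtain ⟨l, hl⟩ := hf.exists_fiberList a
    exact ⟨_, hl.flatMap hH hf hg hL⟩
  · by_cases hgw : ∀ u, g.fv (some u) ≠ some w
    · exact isUniqueFiberInner_comp_of_forall_fv_ne hH hf hg hgw
    · obtain ⟨u, hu⟩ := not_forall_not.1 hgw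
      exact isUniqueFiberInner_comp_of_fv_eq hH hf hg hu hw

end Comp

theorem IsGraphMap.id (G : CGraph) : IsGraphMap (PreMap.id G) := by
  refine ⟨rfl, fun _ => rfl, fun a => ⟨[a], ?_, List.nodup_singleton a, ?_⟩,
    fun v v' h _ => ?_, fun w hw => absurd rfl (hw w)⟩
  · simp [PreMap.id]
  · exact isBivalentPath_iff.2 ⟨isPath_singleton.2 ⟨rfl, rfl⟩, fun A c d B h => by
      have := congrArg List.length h
      simp at this
      omega⟩
  · obtain rfl : v = v' := Option.some_injective _ h
    exact JoinedOutside.refl (some v)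

end CGraph

open CGraph in
theorem graphMaps_form_category :
    (∀ (G H K : CGraph), G.Connected → H.Connected → K.Connected →
      ∀ (f : PreMap G H) (g : PreMap H K), IsGraphMap f → IsGraphMap g →
        IsGraphMap (f.comp g)) ∧
    (∀ G : CGraph, G.Connected → IsGraphMap (PreMap.id G)) ∧
    (∀ (G H : CGraph) (f : PreMap G H),
      (PreMap.id G).comp f = f ∧ f.comp (PreMap.id H) = f) ∧
    (∀ (G H K L : CGraph) (f : PreMap G H) (g : PreMap H K) (h : PreMap K L),
      (f.comp g).comp h = f.comp (g.comp h)) :=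
  ⟨fun _ _ _ hG hH _ _ _ hf hg => hf.comp hG hH hg, fun G _ => IsGraphMap.id G,
    fun _ _ _ => ⟨rfl, rfl⟩, fun _ _ _ _ _ _ _ => rfl⟩
end

section
/- For a combinatorial graph map f : Γ → Λ between connected graphs and any vertex w of Λ lying in the image of f_v, the fiber subgraph f⁻¹(w) is a connected graph. -/
namespace CGraph

/-- The condition for an arc of `Γ` to belong to the fiber of a pre-map `f : Γ → Λ`
over a vertex `w` of `Λ`: the arc (and its `†`-partner) is not in the image of `f_a`,
and both of its endpoints are vertices lying in `f_v⁻¹(w)`. -/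
def FiberArc {G H : CGraph} (f : PreMap G H) (w : H.V) (a : G.A) : Prop :=
  a ∉ Set.range f.fa ∧ G.dag a ∉ Set.range f.fa ∧
    (∃ v, G.t a = some v ∧ f.fv (some v) = some w) ∧
    (∃ v, G.t (G.dag a) = some v ∧ f.fv (some v) = some w)

/-- The fiber `f⁻¹(w)` of a pre-map `f : Γ → Λ` over a vertex `w` of `Λ`: the subgraph
of `Γ` with vertex set `f_v⁻¹(w)` and arc set the arcs outside the image of `f_a` with
both endpoints in `f_v⁻¹(w)`. -/
noncomputable def fiber {G H : CGraph} (f : PreMap G H) (w : H.V) : CGraph where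
  V := {v : G.V // f.fv (some v) = some w}
  A := {a : G.A // FiberArc f w a}
  fintypeV := Fintype.ofFinite _
  fintypeA := Fintype.ofFinite _
  dag a := ⟨G.dag a.1, a.2.2.1, by rw [G.dag_dag]; exact a.2.1, a.2.2.2.2, by
    rw [G.dag_dag]; exact a.2.2.2.1⟩
  dag_dag a := Subtype.ext (G.dag_dag a.1)
  dag_ne a h := G.dag_ne a.1 (congrArg Subtype.val h)
  t a := some ⟨a.2.2.2.1.choose, a.2.2.2.1.choose_spec.2⟩

end CGraph

/-!
Condition (4) joins any two vertices of `f⁻¹(w)` by a path in `Γ` avoiding the image of `f_a`.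
An arc `c` outside that image has empty preimage, so condition (3) makes the empty path run
from `f_v(t(c†))` to `f_v(t(c))`: both endpoints of `c` have the same image. Hence the path
never leaves `f⁻¹(w)` and consists of fiber arcs, and every arc of the fiber touches a vertex.
-/

open Relation

namespace CGraph

theorem eqvGen_touch_of_t_dag_of_t {G : CGraph} {a : G.A} {u v : G.V}
    (hu : G.t (G.dag a) = some u) (hv : G.t a = some v) :
    EqvGen G.Touch (Sum.inl u) (Sum.inl v) := by
  have hdag : EqvGen G.Touch (Sum.inr (G.dag a)) (Sum.inr a) := by
    simpa only [G.dag_dag] using EqvGen.rel _ _ (Touch.dag (G := G) (G.dag a))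
  exact ((EqvGen.rel _ _ (Touch.incid _ _ hu)).symm _ _).trans _ _ _
    (hdag.trans _ _ _ (EqvGen.rel _ _ (Touch.incid _ _ hv)))

theorem connected_of_eqvGen_vertices {G : CGraph} (v₀ : G.V) (ht : ∀ a, G.t a ≠ none)
    (hV : ∀ u v : G.V, EqvGen G.Touch (Sum.inl u) (Sum.inl v)) : G.Connected := by
  have toVertex : ∀ x : G.V ⊕ G.A, ∃ v, EqvGen G.Touch x (Sum.inl v) := by
    rintro (v | a)
    · exact ⟨v, EqvGen.refl _⟩
    · obtain ⟨v, hv⟩ := Option.ne_none_iff_exists'.mp (ht a)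
      exact ⟨v, EqvGen.rel _ _ (Touch.incid a v hv)⟩
  refine ⟨⟨Sum.inl v₀⟩, fun x y => ?_⟩
  obtain ⟨u, hxu⟩ := toVertex x
  obtain ⟨v, hyv⟩ := toVertex y
  exact hxu.trans _ _ _ ((hV u v).trans _ _ _ (hyv.symm _ _))

variable {G H : CGraph} {f : PreMap G H} {w : H.V}

theorem fiber_t_eq_some {a : (fiber f w).A} {u : (fiber f w).V} (h : G.t a.1 = some u.1) :
    (fiber f w).t a = some u :=
  congrArg some (Subtype.ext (Option.some.inj (a.2.2.2.1.choose_spec.1.symm.trans h)))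

namespace IsGraphMap

variable (hf : IsGraphMap f) {c : G.A}
include hf

theorem fv_t_dag_eq_fv_t (hc : c ∉ Set.range f.fa) : f.fv (G.t (G.dag c)) = f.fv (G.t c) := by
  obtain ⟨l, hmem, -, hpath, -⟩ := hf.2.2.1 c
  obtain rfl : l = [] := List.eq_nil_iff_forall_not_mem.mpr fun b hb => hc ⟨b, (hmem b).mp hb⟩
  exact hpath

theorem dag_not_mem_range (hc : c ∉ Set.range f.fa) : G.dag c ∉ Set.range f.fa := by
  rintro ⟨b, hb⟩
  exact hc ⟨H.dag b, by rw [hf.2.1, hb, G.dag_dag]⟩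

theorem fiberArc_of_not_mem_range (hc : c ∉ Set.range f.fa) {v : G.V}
    (hv : G.t (G.dag c) = some v) (hvw : f.fv (some v) = some w) : FiberArc f w c := by
  have htc : f.fv (G.t c) = some w := by rw [← hf.fv_t_dag_eq_fv_t hc, hv, hvw]
  obtain ⟨u, hu⟩ : ∃ u, G.t c = some u := by
    cases h : G.t c with
    | none => rw [h, hf.1] at htc; exact absurd htc (Option.some_ne_none w).symm
    | some u => exact ⟨u, rfl⟩
  exact ⟨hc, hf.dag_not_mem_range hc, ⟨u, hu, hu ▸ htc⟩, ⟨v, hv, hvw⟩⟩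

theorem eqvGen_fiber_of_isPath {l : List G.A} (hl : ∀ c ∈ l, c ∉ Set.range f.fa)
    {v v' : (fiber f w).V} (hp : G.IsPath l (some v.1) (some v'.1)) :
    EqvGen (fiber f w).Touch (Sum.inl v) (Sum.inl v') := by
  induction l generalizing v with
  | nil => exact Subtype.ext (Option.some.inj hp) ▸ EqvGen.refl _
  | cons c l ih =>
    obtain ⟨hdc, hrest⟩ := hp
    have hc := hl c List.mem_cons_self
    let a : (fiber f w).A := ⟨c, hf.fiberArc_of_not_mem_range hc hdc v.2⟩
    obtain ⟨u, hu, huw⟩ := a.2.2.2.1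
    have hvu : EqvGen (fiber f w).Touch (Sum.inl v) (Sum.inl ⟨u, huw⟩) :=
      eqvGen_touch_of_t_dag_of_t (a := a) (fiber_t_eq_some hdc) (fiber_t_eq_some hu)
    exact hvu.trans _ _ _
      (ih (fun d hd => hl d (List.mem_cons_of_mem _ hd)) (by rw [← hu]; exact hrest))

end IsGraphMap

end CGraph

open CGraph in
theorem fiber_connected_general (G H : CGraph)
    (f : PreMap G H) (hf : IsGraphMap f) (w : H.V)
    (hw : ∃ v : G.V, f.fv (some v) = some w) :
    (fiber f w).Connected := by
  obtain ⟨v₀, hv₀⟩ := hw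
  refine connected_of_eqvGen_vertices ⟨v₀, hv₀⟩ (fun _ => Option.some_ne_none _) ?_
  rintro ⟨v, hv⟩ ⟨v', hv'⟩
  obtain ⟨l, hl, hp⟩ := hf.2.2.2.1 v v' (hv.trans hv'.symm) (by simp [hv])
  exact hf.eqvGen_fiber_of_isPath hl hp

open CGraph in
theorem fiber_connected (G H : CGraph) (hG : G.Connected) (hH : H.Connected)
    (f : PreMap G H) (hf : IsGraphMap f) (w : H.V)
    (hw : ∃ v : G.V, f.fv (some v) = some w) :
    (fiber f w).Connected :=
  fiber_connected_general G H f hf w hw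
end
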